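/- Global convergence (Proposition 3): Let x^{(0)} be a feasible curve and define GEORCE iterates by x^{(i+1)} = (1−α_i) x^{(i)} + α_i x̃^{(i)}, where x̃^{(i)} is the GEORCE-updated curve of x^{(i)} and α_i ∈ [0,1] is chosen by exact line search, i.e., α_i minimizes α ↦ E((1−α)x^{(i)} + α x̃^{(i)}) over [0,1]. Then every iterate x^{(i)} is feasible, the sequence of energies E(x^{(i)}) is nonincreasing and bounded below by 0, hence converges; moreover, if the sequence of curves x^{(i)} converges to a curve x̂, then x̂ is a critical point of E (the gradient of E with respect to every interior point of x̂ vanishes). -/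

import Mathlib

open Matrix Filter

/-- Reinterpret a vector in `Fin d → ℝ` as a point of `EuclideanSpace ℝ (Fin d)`
(the two types are definitionally equal). -/
def toE (d : ℕ) (v : Fin d → ℝ) : EuclideanSpace ℝ (Fin d) := WithLp.toLp 2 v

/-- The discretized energy functional. -/
noncomputable def energy (d T : ℕ)
    (G : EuclideanSpace ℝ (Fin d) → Matrix (Fin d) (Fin d) ℝ)
    (x : ℕ → EuclideanSpace ℝ (Fin d)) : ℝ :=
  ∑ t ∈ Finset.range T, (x (t + 1) - x t) ⬝ᵥ (G (x t)).mulVec (x (t + 1) - x t)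

open InnerProductSpace

noncomputable section
namespace Georce

variable {d : ℕ} (G : EuclideanSpace ℝ (Fin d) → Matrix (Fin d) (Fin d) ℝ)

/-- coordinate of a finite sum in EuclideanSpace -/
theorem sum_apply {ι : Type*} (s : Finset ι) (f : ι → EuclideanSpace ℝ (Fin d)) (i : Fin d) :
    (∑ j ∈ s, f j) i = ∑ j ∈ s, f j i :=
  map_sum (EuclideanSpace.proj (𝕜 := ℝ) i).toLinearMap f s

/-- gradient of an entry of G -/
def gradG (j k : Fin d) (x : EuclideanSpace ℝ (Fin d)) : EuclideanSpace ℝ (Fin d) :=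
  gradient (fun y => G y j k) x

/-- the ν vector -/
def nuf (x : EuclideanSpace ℝ (Fin d)) (u : Fin d → ℝ) : EuclideanSpace ℝ (Fin d) :=
  ∑ j, ∑ k, (u j * u k) • gradG G j k x

theorem nuf_apply (x : EuclideanSpace ℝ (Fin d)) (u : Fin d → ℝ) (i : Fin d) :
    nuf G x u i = ∑ j, ∑ k, (u j * u k) * gradG G j k x i := by
  rw [nuf, sum_apply]
  refine Finset.sum_congr rfl fun j _ => ?_
  rw [sum_apply]
  rfl

theorem quad_eq (u : Fin d → ℝ) :
    (fun y : EuclideanSpace ℝ (Fin d) => u ⬝ᵥ (G y).mulVec u)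
      = fun y => ∑ j, ∑ k, (u j * u k) * G y j k := by
  funext y
  simp only [dotProduct, Matrix.mulVec, Finset.mul_sum]
  exact Finset.sum_congr rfl fun j _ => Finset.sum_congr rfl fun k _ => by ring

theorem hasGradientAt_quad {x : EuclideanSpace ℝ (Fin d)}
    (hG : ∀ j k, DifferentiableAt ℝ (fun y => G y j k) x) (u : Fin d → ℝ) :
    HasGradientAt (fun y => u ⬝ᵥ (G y).mulVec u) (nuf G x u) x := by
  have hF : HasFDerivAt (fun y : EuclideanSpace ℝ (Fin d) => ∑ j, ∑ k, (u j * u k) * G y j k)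
      (∑ j : Fin d, ∑ k : Fin d, (u j * u k) • fderiv ℝ (fun y => G y j k) x) x :=
    HasFDerivAt.fun_sum fun j _ => HasFDerivAt.fun_sum fun k _ =>
      ((hG j k).hasFDerivAt).const_mul _
  rw [quad_eq]
  have h2 := hF.hasGradientAt
  have h3 : (toDual ℝ (EuclideanSpace ℝ (Fin d))).symm
      (∑ j : Fin d, ∑ k : Fin d, (u j * u k) • fderiv ℝ (fun y => G y j k) x)
      = nuf G x u := by
    rw [map_sum]
    refine Finset.sum_congr rfl fun j _ => ?_
    rw [map_sum]
    refine Finset.sum_congr rfl fun k _ => ?_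
    rw [LinearIsometryEquiv.map_smul]
    rfl
  rwa [h3] at h2

theorem gradient_quad {x : EuclideanSpace ℝ (Fin d)}
    (hG : ∀ j k, DifferentiableAt ℝ (fun y => G y j k) x) (u : Fin d → ℝ) :
    gradient (fun y => u ⬝ᵥ (G y).mulVec u) x = nuf G x u :=
  (hasGradientAt_quad G hG u).gradient

end Georce

namespace Georce2
open Georce
variable {d : ℕ} {G : EuclideanSpace ℝ (Fin d) → Matrix (Fin d) (Fin d) ℝ}

theorem continuous_gradG (hG : ∀ j k, ContDiff ℝ (⊤ : ℕ∞) fun y => G y j k) (j k : Fin d) :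
    Continuous (gradG G j k) :=
  (LinearIsometryEquiv.continuous _).comp ((hG j k).continuous_fderiv (by simp))

theorem tendsto_coord {v : ℕ → EuclideanSpace ℝ (Fin d)} {w : EuclideanSpace ℝ (Fin d)}
    (h : Tendsto v atTop (nhds w)) (j : Fin d) :
    Tendsto (fun i => v i j) atTop (nhds (w j)) :=
  ((EuclideanSpace.proj (𝕜 := ℝ) j).continuous.tendsto _).comp h

theorem tendsto_unE {v : ℕ → EuclideanSpace ℝ (Fin d)} {w : EuclideanSpace ℝ (Fin d)}
    (h : Tendsto v atTop (nhds w)) :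
    Tendsto (fun i => WithLp.ofLp (v i)) atTop (nhds (WithLp.ofLp w)) :=
  ((PiLp.continuous_ofLp ..).tendsto _).comp h

theorem tendsto_toE {v : ℕ → Fin d → ℝ} {w : Fin d → ℝ}
    (h : Tendsto v atTop (nhds w)) :
    Tendsto (fun i => toE d (v i)) atTop (nhds (toE d w)) :=
  ((PiLp.continuous_toLp ..).tendsto _).comp h

theorem tendsto_nuf (hG : ∀ j k, ContDiff ℝ (⊤ : ℕ∞) fun y => G y j k)
    {x : ℕ → EuclideanSpace ℝ (Fin d)} {x' : EuclideanSpace ℝ (Fin d)}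
    {u : ℕ → EuclideanSpace ℝ (Fin d)} {u' : EuclideanSpace ℝ (Fin d)}
    (hx : Tendsto x atTop (nhds x')) (hu : Tendsto u atTop (nhds u')) :
    Tendsto (fun i => nuf G (x i) (u i)) atTop (nhds (nuf G x' u')) := by
  unfold nuf
  refine tendsto_finset_sum _ fun j _ => tendsto_finset_sum _ fun k _ => ?_
  exact ((tendsto_coord hu j).mul (tendsto_coord hu k)).smul
    (((continuous_gradG hG j k).tendsto _).comp hx)

theorem tendsto_G (hG : ∀ j k, ContDiff ℝ (⊤ : ℕ∞) fun y => G y j k)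
    {x : ℕ → EuclideanSpace ℝ (Fin d)} {x' : EuclideanSpace ℝ (Fin d)}
    (hx : Tendsto x atTop (nhds x')) :
    Tendsto (fun i => G (x i)) atTop (nhds (G x')) := by
  refine tendsto_pi_nhds.2 fun j => ?_
  refine tendsto_pi_nhds.2 fun k => ?_
  exact (((hG j k).continuous.tendsto _).comp hx)

theorem tendsto_inv {A : ℕ → Matrix (Fin d) (Fin d) ℝ} {B : Matrix (Fin d) (Fin d) ℝ}
    (h : Tendsto A atTop (nhds B)) (hB : B.det ≠ 0) :
    Tendsto (fun i => (A i)⁻¹) atTop (nhds B⁻¹) := by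
  have hdet : Tendsto (fun i => (A i).det) atTop (nhds B.det) :=
    ((continuous_id.matrix_det).tendsto _).comp h
  have hadj : Tendsto (fun i => (A i).adjugate) atTop (nhds B.adjugate) :=
    ((continuous_id.matrix_adjugate).tendsto _).comp h
  have := (hdet.inv₀ hB).smul hadj
  simp only [Matrix.inv_def, Ring.inverse_eq_inv']
  exact this

theorem tendsto_mulVec {A : ℕ → Matrix (Fin d) (Fin d) ℝ} {B : Matrix (Fin d) (Fin d) ℝ}
    {v : ℕ → Fin d → ℝ} {w : Fin d → ℝ}
    (hA : Tendsto A atTop (nhds B)) (hv : Tendsto v atTop (nhds w)) :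
    Tendsto (fun i => (A i).mulVec (v i)) atTop (nhds (B.mulVec w)) := by
  rw [tendsto_pi_nhds]
  intro j
  simp only [Matrix.mulVec, dotProduct]
  refine tendsto_finset_sum _ fun k _ => Tendsto.mul ?_ ?_
  · have := tendsto_pi_nhds.1 hA j
    exact tendsto_pi_nhds.1 this k
  · exact tendsto_pi_nhds.1 hv k

theorem tendsto_quadform {A : ℕ → Matrix (Fin d) (Fin d) ℝ} {B : Matrix (Fin d) (Fin d) ℝ}
    {v : ℕ → Fin d → ℝ} {w : Fin d → ℝ}
    (hA : Tendsto A atTop (nhds B)) (hv : Tendsto v atTop (nhds w)) :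
    Tendsto (fun i => v i ⬝ᵥ (A i).mulVec (v i)) atTop (nhds (w ⬝ᵥ B.mulVec w)) := by
  simp only [dotProduct]
  exact tendsto_finset_sum _ fun k _ =>
    (tendsto_pi_nhds.1 hv k).mul (tendsto_pi_nhds.1 (tendsto_mulVec hA hv) k)

end Georce2

namespace Georce
variable {d : ℕ}

theorem isSymm_apply {M : Matrix (Fin d) (Fin d) ℝ} (hM : M.IsSymm) (j k : Fin d) :
    M j k = M k j := by
  conv_lhs => rw [← hM]
  rfl

theorem sum_helper {M : Matrix (Fin d) (Fin d) ℝ} (hM : M.IsSymm) (v h : Fin d → ℝ) :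
    ∑ j, ∑ k, (v j * (M j k * h k) + M j k * v k * h j)
      = ∑ i, 2 * (M.mulVec v i * h i) := by
  have e1 : ∑ j, ∑ k, (v j * (M j k * h k) + M j k * v k * h j)
      = (∑ j, ∑ k, v j * (M j k * h k)) + ∑ j, ∑ k, M j k * v k * h j := by
    rw [← Finset.sum_add_distrib]
    exact Finset.sum_congr rfl fun j _ => by rw [← Finset.sum_add_distrib]
  rw [e1, Finset.sum_comm (f := fun j k => v j * (M j k * h k))]
  have e2 : ∀ k : Fin d, ∑ j, v j * (M j k * h k) = M.mulVec v k * h k := by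
    intro k
    simp only [Matrix.mulVec, dotProduct, Finset.sum_mul]
    exact Finset.sum_congr rfl fun j _ => by rw [isSymm_apply hM j k]; ring
  have e3 : ∀ j : Fin d, ∑ k, M j k * v k * h j = M.mulVec v j * h j := by
    intro j
    simp only [Matrix.mulVec, dotProduct, Finset.sum_mul]
  rw [Finset.sum_congr rfl fun k _ => e2 k, Finset.sum_congr rfl fun j _ => e3 j,
    ← Finset.sum_add_distrib]
  exact Finset.sum_congr rfl fun i _ => by ring

theorem hasGradientAt_sq {M : Matrix (Fin d) (Fin d) ℝ} (hM : M.IsSymm)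
    (c x : EuclideanSpace ℝ (Fin d)) :
    HasGradientAt (fun y : EuclideanSpace ℝ (Fin d) => (y - c) ⬝ᵥ M.mulVec (y - c))
      (toE d ((2 : ℝ) • M.mulVec (x - c))) x := by
  have hrw : (fun y : EuclideanSpace ℝ (Fin d) => (y - c) ⬝ᵥ M.mulVec (y - c))
      = fun y => ∑ j, ∑ k, (y j - c j) * (M j k * (y k - c k)) := by
    funext y
    simp only [dotProduct, Matrix.mulVec, Finset.mul_sum]
    refine Finset.sum_congr rfl fun j _ => ?_
    refine Finset.sum_congr rfl fun k _ => ?_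
    have h1 : (y - c) j = y j - c j := rfl
    have h2 : (y - c) k = y k - c k := rfl
    rfl
  have hproj : ∀ j : Fin d, HasFDerivAt (fun y : EuclideanSpace ℝ (Fin d) => y j - c j)
      (EuclideanSpace.proj (𝕜 := ℝ) j : EuclideanSpace ℝ (Fin d) →L[ℝ] ℝ) x :=
    fun j => ((EuclideanSpace.proj (𝕜 := ℝ) j).hasFDerivAt).sub_const (c j)
  have hF : HasFDerivAt (fun y : EuclideanSpace ℝ (Fin d) =>
      ∑ j, ∑ k, (y j - c j) * (M j k * (y k - c k)))
      (∑ j : Fin d, ∑ k : Fin d,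
        ((x j - c j) • (M j k • (EuclideanSpace.proj (𝕜 := ℝ) k
            : EuclideanSpace ℝ (Fin d) →L[ℝ] ℝ))
          + (M j k * (x k - c k)) • (EuclideanSpace.proj (𝕜 := ℝ) j
            : EuclideanSpace ℝ (Fin d) →L[ℝ] ℝ))) x :=
    HasFDerivAt.fun_sum fun j _ => HasFDerivAt.fun_sum fun k _ =>
      (hproj j).mul ((hproj k).const_mul (M j k))
  rw [hrw]
  have h2 := hF.hasGradientAt
  have h3 : (toDual ℝ (EuclideanSpace ℝ (Fin d))).symm
      (∑ j : Fin d, ∑ k : Fin d,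
        ((x j - c j) • (M j k • (EuclideanSpace.proj (𝕜 := ℝ) k
            : EuclideanSpace ℝ (Fin d) →L[ℝ] ℝ))
          + (M j k * (x k - c k)) • (EuclideanSpace.proj (𝕜 := ℝ) j
            : EuclideanSpace ℝ (Fin d) →L[ℝ] ℝ)))
      = toE d ((2 : ℝ) • M.mulVec (x - c)) := by
    rw [show toE d ((2 : ℝ) • M.mulVec (x - c)) = (toDual ℝ (EuclideanSpace ℝ (Fin d))).symm
        ((toDual ℝ (EuclideanSpace ℝ (Fin d))) (toE d ((2 : ℝ) • M.mulVec (x - c)))) from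
      (LinearIsometryEquiv.symm_apply_apply _ _).symm]
    congr 1
    ext h
    simp only [ContinuousLinearMap.sum_apply, ContinuousLinearMap.add_apply,
      ContinuousLinearMap.smul_apply, PiLp.proj_apply, smul_eq_mul,
      toDual_apply_apply, PiLp.inner_apply, RCLike.inner_apply, conj_trivial]
    have hv : ∀ i : Fin d, toE d ((2 : ℝ) • M.mulVec (x - c)) i
        = 2 * (M.mulVec (fun i => x i - c i) i) := fun i => rfl
    rw [show (∑ i, h i * toE d ((2 : ℝ) • M.mulVec (x - c)) i)
        = ∑ i, 2 * (M.mulVec (fun i => x i - c i) i * h i) from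
      Finset.sum_congr rfl fun i _ => by rw [hv i]; ring]
    rw [← sum_helper hM (fun i => x i - c i) h]
  rwa [h3] at h2
end Georce

namespace Georce
variable {d : ℕ} (G : EuclideanSpace ℝ (Fin d) → Matrix (Fin d) (Fin d) ℝ)

theorem fderiv_entry_apply (j k : Fin d) (x h : EuclideanSpace ℝ (Fin d)) :
    (fderiv ℝ (fun y => G y j k) x) h = ∑ i, gradG G j k x i * h i := by
  rw [show fderiv ℝ (fun y => G y j k) x
      = (toDual ℝ (EuclideanSpace ℝ (Fin d))) (gradG G j k x) from
    ((toDual ℝ (EuclideanSpace ℝ (Fin d))).apply_symm_apply _).symm]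
  simp [toDual_apply_apply, PiLp.inner_apply, RCLike.inner_apply, conj_trivial]
  exact Finset.sum_congr rfl fun i _ => mul_comm _ _

theorem sum_nuf_dot (x : EuclideanSpace ℝ (Fin d)) (u : Fin d → ℝ) (h : EuclideanSpace ℝ (Fin d)) :
    ∑ i, nuf G x u i * h i
      = ∑ j, ∑ k, (u j * u k) * ((fderiv ℝ (fun y => G y j k) x) h) := by
  have e1 : ∀ i : Fin d, nuf G x u i * h i
      = ∑ j, ∑ k, (u j * u k) * (gradG G j k x i * h i) := by
    intro i
    rw [nuf_apply, Finset.sum_mul]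
    refine Finset.sum_congr rfl fun j _ => ?_
    rw [Finset.sum_mul]
    exact Finset.sum_congr rfl fun k _ => by ring
  rw [Finset.sum_congr rfl fun i _ => e1 i, Finset.sum_comm]
  refine Finset.sum_congr rfl fun j _ => ?_
  rw [Finset.sum_comm]
  refine Finset.sum_congr rfl fun k _ => ?_
  rw [fderiv_entry_apply, Finset.mul_sum]

theorem hasGradientAt_back {x : EuclideanSpace ℝ (Fin d)}
    (hG : ∀ j k, DifferentiableAt ℝ (fun y => G y j k) x)
    (hsym : (G x).IsSymm) (c : EuclideanSpace ℝ (Fin d)) :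
    HasGradientAt (fun y : EuclideanSpace ℝ (Fin d) => (c - y) ⬝ᵥ (G y).mulVec (c - y))
      (nuf G x (fun i => c i - x i)
        - toE d ((2 : ℝ) • (G x).mulVec (fun i => c i - x i))) x := by
  set v : Fin d → ℝ := fun i => c i - x i with hvdef
  have hrw : (fun y : EuclideanSpace ℝ (Fin d) => (c - y) ⬝ᵥ (G y).mulVec (c - y))
      = fun y => ∑ j, ∑ k, (c j - y j) * ((c k - y k) * G y j k) := by
    funext y
    simp only [dotProduct, Matrix.mulVec, Finset.mul_sum]
    refine Finset.sum_congr rfl fun j _ => Finset.sum_congr rfl fun k _ => ?_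
    have h1 : (c - y) j = c j - y j := rfl
    have h2 : (c - y) k = c k - y k := rfl
    rw [h1, Pi.sub_apply]; ring
  have hproj : ∀ j : Fin d, HasFDerivAt (fun y : EuclideanSpace ℝ (Fin d) => c j - y j)
      (-(EuclideanSpace.proj (𝕜 := ℝ) j : EuclideanSpace ℝ (Fin d) →L[ℝ] ℝ)) x :=
    fun j => ((EuclideanSpace.proj (𝕜 := ℝ) j).hasFDerivAt).const_sub (c j)
  have hF : HasFDerivAt (fun y : EuclideanSpace ℝ (Fin d) =>
      ∑ j, ∑ k, (c j - y j) * ((c k - y k) * G y j k))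
      (∑ j : Fin d, ∑ k : Fin d,
        ((c j - x j) • ((c k - x k) • fderiv ℝ (fun y => G y j k) x
            + (G x j k) • (-(EuclideanSpace.proj (𝕜 := ℝ) k
              : EuclideanSpace ℝ (Fin d) →L[ℝ] ℝ)))
          + ((c k - x k) * G x j k) • (-(EuclideanSpace.proj (𝕜 := ℝ) j
              : EuclideanSpace ℝ (Fin d) →L[ℝ] ℝ)))) x :=
    HasFDerivAt.fun_sum fun j _ => HasFDerivAt.fun_sum fun k _ =>
      (hproj j).mul ((hproj k).mul ((hG j k).hasFDerivAt))
  rw [hrw]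
  have h2 := hF.hasGradientAt
  have h3 : (toDual ℝ (EuclideanSpace ℝ (Fin d))).symm
      (∑ j : Fin d, ∑ k : Fin d,
        ((c j - x j) • ((c k - x k) • fderiv ℝ (fun y => G y j k) x
            + (G x j k) • (-(EuclideanSpace.proj (𝕜 := ℝ) k
              : EuclideanSpace ℝ (Fin d) →L[ℝ] ℝ)))
          + ((c k - x k) * G x j k) • (-(EuclideanSpace.proj (𝕜 := ℝ) j
              : EuclideanSpace ℝ (Fin d) →L[ℝ] ℝ))))
      = nuf G x v - toE d ((2 : ℝ) • (G x).mulVec v) := by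
    rw [show nuf G x v - toE d ((2 : ℝ) • (G x).mulVec v)
        = (toDual ℝ (EuclideanSpace ℝ (Fin d))).symm
          ((toDual ℝ (EuclideanSpace ℝ (Fin d)))
            (nuf G x v - toE d ((2 : ℝ) • (G x).mulVec v))) from
      (LinearIsometryEquiv.symm_apply_apply _ _).symm]
    congr 1
    ext h
    simp only [ContinuousLinearMap.sum_apply, ContinuousLinearMap.add_apply,
      ContinuousLinearMap.smul_apply, ContinuousLinearMap.neg_apply,
      PiLp.proj_apply, smul_eq_mul, toDual_apply_apply, PiLp.inner_apply,
      RCLike.inner_apply, conj_trivial]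
    have hsubap : ∀ i : Fin d,
        (nuf G x v - toE d ((2 : ℝ) • (G x).mulVec v)) i
          = nuf G x v i - 2 * (G x).mulVec v i := fun i => rfl
    rw [show (∑ i, h i * (nuf G x v - toE d ((2 : ℝ) • (G x).mulVec v)) i)
        = (∑ i, nuf G x v i * h i) - ∑ i, 2 * ((G x).mulVec v i * h i) from by
      rw [← Finset.sum_sub_distrib]
      exact Finset.sum_congr rfl fun i _ => by rw [hsubap i]; ring]
    rw [sum_nuf_dot, ← sum_helper hsym v h]
    rw [← Finset.sum_sub_distrib]
    refine Finset.sum_congr rfl fun j _ => ?_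
    rw [← Finset.sum_sub_distrib]
    refine Finset.sum_congr rfl fun k _ => ?_
    have : v j = c j - x j := rfl
    have : v k = c k - x k := rfl
    simp only [hvdef]
    ring
  rwa [h3] at h2

end Georce


namespace Georce
variable {d : ℕ} (G : EuclideanSpace ℝ (Fin d) → Matrix (Fin d) (Fin d) ℝ)

theorem abel_sum {T : ℕ} (μ δ : ℕ → Fin d → ℝ) (h0 : δ 0 = 0) (hT : δ T = 0) :
    ∑ t ∈ Finset.range T, μ t ⬝ᵥ (δ (t + 1) - δ t)
      = ∑ t ∈ Finset.range T, (μ (t - 1) - μ t) ⬝ᵥ δ t := by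
  have e1 : ∑ t ∈ Finset.range T, μ t ⬝ᵥ (δ (t + 1) - δ t)
      = (∑ t ∈ Finset.range T, μ t ⬝ᵥ δ (t + 1)) - ∑ t ∈ Finset.range T, μ t ⬝ᵥ δ t := by
    rw [← Finset.sum_sub_distrib]
    exact Finset.sum_congr rfl fun t _ => dotProduct_sub _ _ _
  have e2 : ∑ t ∈ Finset.range T, μ t ⬝ᵥ δ (t + 1)
      = ∑ t ∈ Finset.range T, μ (t - 1) ⬝ᵥ δ t := by
    have e3 : ∀ t ∈ Finset.range T, μ t ⬝ᵥ δ (t + 1) = μ ((t + 1) - 1) ⬝ᵥ δ (t + 1) := by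
      intro t _; norm_num
    rw [Finset.sum_congr rfl e3]
    have e4 := Finset.sum_range_succ' (fun t => μ (t - 1) ⬝ᵥ δ t) T
    rw [Finset.sum_range_succ (fun t => μ (t - 1) ⬝ᵥ δ t) T] at e4
    have e5 : μ (T - 1) ⬝ᵥ δ T = 0 := by rw [hT, dotProduct_zero]
    have e6 : μ (0 - 1) ⬝ᵥ δ 0 = 0 := by rw [h0, dotProduct_zero]
    rw [e5, e6] at e4
    linarith [e4]
  rw [e1, e2, ← Finset.sum_sub_distrib]
  exact Finset.sum_congr rfl fun t _ => (sub_dotProduct _ _ _).symm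

theorem tendsto_energy (hG : ∀ j k, ContDiff ℝ (⊤ : ℕ∞) fun y => G y j k) {T : ℕ}
    {x : ℕ → ℕ → EuclideanSpace ℝ (Fin d)} {y : ℕ → EuclideanSpace ℝ (Fin d)}
    (h : ∀ t, t ≤ T → Tendsto (fun i => x i t) atTop (nhds (y t))) :
    Tendsto (fun i => energy d T G (x i)) atTop (nhds (energy d T G y)) := by
  unfold energy
  refine tendsto_finset_sum _ fun t ht => ?_
  rw [Finset.mem_range] at ht
  exact Georce2.tendsto_quadform (Georce2.tendsto_G hG (h t (le_of_lt ht)))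
    (Georce2.tendsto_unE ((h (t + 1) ht).sub (h t (le_of_lt ht))))

/-- derivative of one energy term along a segment -/
theorem hasDerivAt_term {x : EuclideanSpace ℝ (Fin d)}
    (hG : ∀ j k, DifferentiableAt ℝ (fun y => G y j k) x)
    (u w δ : EuclideanSpace ℝ (Fin d)) :
    HasDerivAt (fun β : ℝ => (u + β • w) ⬝ᵥ (G (x + β • δ)).mulVec (u + β • w))
      (w ⬝ᵥ (G x).mulVec u + u ⬝ᵥ (G x).mulVec w + ∑ i, nuf G x u i * δ i) 0 := by
  have hc : HasDerivAt (fun β : ℝ => x + β • δ) δ 0 := by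
    simpa using ((hasDerivAt_id (0 : ℝ)).smul_const δ).const_add x
  have hc0 : x + (0 : ℝ) • δ = x := by simp
  have hjk : ∀ j k, HasDerivAt (fun β : ℝ => G (x + β • δ) j k)
      ((fderiv ℝ (fun y => G y j k) x) δ) 0 := by
    intro j k
    have hf : HasFDerivAt (fun y => G y j k) (fderiv ℝ (fun y => G y j k) x)
        ((fun β : ℝ => x + β • δ) 0) := by
      rw [show (fun β : ℝ => x + β • δ) 0 = x from hc0]
      exact (hG j k).hasFDerivAt
    exact hf.comp_hasDerivAt 0 hc
  have hcoord : ∀ j : Fin d, HasDerivAt (fun β : ℝ => u j + β * w j) (w j) 0 := by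
    intro j
    simpa using (hasDerivAt_mul_const (w j)).const_add (u j)
  have hterm : ∀ j k : Fin d, HasDerivAt
      (fun β : ℝ => (u j + β * w j) * ((u k + β * w k) * G (x + β • δ) j k))
      (u j * (u k * ((fderiv ℝ (fun y => G y j k) x) δ) + G x j k * w k)
        + u k * G x j k * w j) 0 := by
    intro j k
    have h1 := (hcoord k).mul (hjk j k)
    have h2 := (hcoord j).mul h1
    exact h2.congr_deriv (by simp only [Pi.mul_apply, hc0]; ring)
  have hsum : HasDerivAt
      (fun β : ℝ => ∑ j, ∑ k, (u j + β * w j) * ((u k + β * w k) * G (x + β • δ) j k))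
      (∑ j : Fin d, ∑ k : Fin d,
        (u j * (u k * ((fderiv ℝ (fun y => G y j k) x) δ) + G x j k * w k)
          + u k * G x j k * w j)) 0 :=
    HasDerivAt.fun_sum fun j _ => HasDerivAt.fun_sum fun k _ => hterm j k
  have hfun : (fun β : ℝ => (u + β • w) ⬝ᵥ (G (x + β • δ)).mulVec (u + β • w))
      = fun β : ℝ => ∑ j, ∑ k, (u j + β * w j) * ((u k + β * w k) * G (x + β • δ) j k) := by
    funext β
    simp only [dotProduct, Matrix.mulVec, Finset.mul_sum]
    refine Finset.sum_congr rfl fun j _ => Finset.sum_congr rfl fun k _ => ?_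
    have h1 : (u + β • w) j = u j + β * w j := rfl
    have h2 : (u + β • w) k = u k + β * w k := rfl
    rw [h1]; simp only [Pi.add_apply, Pi.smul_apply, smul_eq_mul]; ring
  rw [hfun]
  have hD : (∑ j : Fin d, ∑ k : Fin d,
      (u j * (u k * ((fderiv ℝ (fun y => G y j k) x) δ) + G x j k * w k)
        + u k * G x j k * w j))
      = w ⬝ᵥ (G x).mulVec u + u ⬝ᵥ (G x).mulVec w + ∑ i, nuf G x u i * δ i := by
    rw [sum_nuf_dot]
    simp only [dotProduct, Matrix.mulVec, Finset.mul_sum, ← Finset.sum_add_distrib]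
    exact Finset.sum_congr rfl fun j _ => Finset.sum_congr rfl fun k _ => by ring
  rwa [hD] at hsum

end Georce

namespace Georce
variable {d : ℕ} (G : EuclideanSpace ℝ (Fin d) → Matrix (Fin d) (Fin d) ℝ)

theorem dot_symm {M : Matrix (Fin d) (Fin d) ℝ} (h : M.IsSymm) (v w : Fin d → ℝ) :
    v ⬝ᵥ M.mulVec w = w ⬝ᵥ M.mulVec v := by
  simp only [dotProduct, Matrix.mulVec, Finset.mul_sum]
  rw [Finset.sum_comm]
  exact Finset.sum_congr rfl fun j _ => Finset.sum_congr rfl fun k _ => by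
    rw [isSymm_apply h k j]; ring

theorem quad_nonneg {M : Matrix (Fin d) (Fin d) ℝ} (h : M.PosDef) (v : Fin d → ℝ) :
    0 ≤ v ⬝ᵥ M.mulVec v := by
  simpa using h.posSemidef.re_dotProduct_nonneg v

theorem quad_pos {M : Matrix (Fin d) (Fin d) ℝ} (h : M.PosDef) {v : Fin d → ℝ} (hv : v ≠ 0) :
    0 < v ⬝ᵥ M.mulVec v := by
  simpa using h.re_dotProduct_pos hv

theorem sum_mulVec {ι : Type*} (s : Finset ι) (M : ι → Matrix (Fin d) (Fin d) ℝ)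
    (v : Fin d → ℝ) : (∑ t ∈ s, M t).mulVec v = ∑ t ∈ s, (M t).mulVec v := by
  funext i
  rw [Finset.sum_apply]
  simp only [Matrix.mulVec, dotProduct, Matrix.sum_apply, Finset.sum_mul]
  rw [Finset.sum_comm]

theorem posdef_sum {ι : Type*} {s : Finset ι} (hs : s.Nonempty)
    {M : ι → Matrix (Fin d) (Fin d) ℝ} (h : ∀ t ∈ s, (M t).PosDef) :
    (∑ t ∈ s, M t).PosDef :=
  Finset.sum_induction_nonempty M Matrix.PosDef (fun _ _ => Matrix.PosDef.add) hs h

/-- minimum at the left endpoint implies nonnegative derivative -/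
theorem deriv_nonneg_of_min {f : ℝ → ℝ} {D : ℝ} (hf : HasDerivAt f D 0)
    (hmin : ∀ β ∈ Set.Icc (0 : ℝ) 1, f 0 ≤ f β) : 0 ≤ D := by
  have h1 : Tendsto (slope f 0) (nhdsWithin 0 (Set.Ioi 0)) (nhds D) :=
    (hasDerivAt_iff_tendsto_slope.1 hf).mono_left
      (nhdsWithin_mono _ (fun x hx => ne_of_gt hx))
  refine ge_of_tendsto h1 ?_
  filter_upwards [Ioc_mem_nhdsGT_of_mem (Set.mem_Ico.2 ⟨le_refl 0, one_pos⟩)] with β hβ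
  rw [slope_def_field]
  have h2 : f 0 ≤ f β := hmin β ⟨le_of_lt hβ.1, hβ.2⟩
  have h3 : (0:ℝ) < β - 0 := by linarith [hβ.1]
  exact div_nonneg (by linarith) (by linarith)

/-- sum of the energy terms' gradients -/
theorem hasGradientAt_sum {ι : Type*} (s : Finset ι)
    (F : ι → EuclideanSpace ℝ (Fin d) → ℝ) (V : ι → EuclideanSpace ℝ (Fin d))
    {x : EuclideanSpace ℝ (Fin d)} (h : ∀ i ∈ s, HasGradientAt (F i) (V i) x) :
    HasGradientAt (fun y => ∑ i ∈ s, F i y) (∑ i ∈ s, V i) x := by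
  have hF := HasFDerivAt.fun_sum (fun i hi => (h i hi).hasFDerivAt)
  have h2 := hF.hasGradientAt
  rwa [← map_sum, LinearIsometryEquiv.symm_apply_apply] at h2

/-- identity viewing of EuclideanSpace as pi type -/
def unE (v : EuclideanSpace ℝ (Fin d)) : Fin d → ℝ := WithLp.ofLp v

def Nsum (x : ℕ → EuclideanSpace ℝ (Fin d)) (t : ℕ) : EuclideanSpace ℝ (Fin d) :=
  ∑ s ∈ Finset.Icc 1 t, nuf G (x s) (x (s + 1) - x s)

def Smat (T : ℕ) (x : ℕ → EuclideanSpace ℝ (Fin d)) : Matrix (Fin d) (Fin d) ℝ :=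
  ∑ s ∈ Finset.range T, (G (x s))⁻¹

def usol (T : ℕ) (x : ℕ → EuclideanSpace ℝ (Fin d)) (ba : Fin d → ℝ) (t : ℕ) : Fin d → ℝ :=
  (G (x t))⁻¹.mulVec
    ((Smat G T x)⁻¹.mulVec
        (ba - (2⁻¹ : ℝ) • ∑ s ∈ Finset.range T, ((G (x s))⁻¹.mulVec (unE (Nsum G x s))))
      + (2⁻¹ : ℝ) • unE (Nsum G x t))

theorem update_unique (hpos : ∀ y, (G y).PosDef) {T : ℕ} (hT : 1 ≤ T)
    (x ut μt : ℕ → EuclideanSpace ℝ (Fin d)) (ba : Fin d → ℝ)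
    (h1 : ∀ t < T, (2 : ℝ) • toE d ((G (x t)).mulVec (ut t)) + μt t = 0)
    (h2 : ∀ t, 1 ≤ t → t ≤ T - 1 → nuf G (x t) (x (t + 1) - x t) + μt t = μt (t - 1))
    (h3 : ∑ t ∈ Finset.range T, ut t = toE d ba) :
    ∀ t < T, ut t = toE d (usol G T x ba t) := by
  have hdet : ∀ y, IsUnit (G y).det :=
    fun y => isUnit_iff_ne_zero.2 (ne_of_gt (hpos y).det_pos)
  have hmu : ∀ t < T, μt t = -((2 : ℝ) • toE d ((G (x t)).mulVec (ut t))) := by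
    intro t ht
    have h := h1 t ht
    rw [← sub_eq_zero, sub_neg_eq_add, add_comm]
    exact h
  have hrec : ∀ t, t ≤ T - 1 → toE d ((G (x t)).mulVec (ut t))
      = toE d ((G (x 0)).mulVec (ut 0)) + (2⁻¹ : ℝ) • Nsum G x t := by
    intro t
    induction t with
    | zero =>
      intro _
      have : Nsum G x 0 = 0 := by
        unfold Nsum
        rw [show Finset.Icc 1 0 = (∅ : Finset ℕ) from rfl]
        exact Finset.sum_empty
      rw [this, smul_zero, add_zero]
    | succ n ih =>
      intro hn
      have hn' : n ≤ T - 1 := by omega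
      have h2' := h2 (n + 1) (by omega) hn
      rw [hmu (n + 1) (by omega), show n + 1 - 1 = n from rfl, hmu n (by omega)] at h2'
      set A := (2 : ℝ) • toE d ((G (x (n + 1))).mulVec (ut (n + 1))) with hA
      set B := (2 : ℝ) • toE d ((G (x n)).mulVec (ut n)) with hB
      set nu := nuf G (x (n + 1)) ((x (n + 1 + 1)) - x (n + 1)) with hnu
      have e0 : (nu + -A) - (-B) = 0 := sub_eq_zero_of_eq h2'
      have e : A - (B + nu) = 0 := by rw [← neg_eq_zero, ← e0]; abel
      have eA : A = B + nu := sub_eq_zero.1 e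
      have hX1 : toE d ((G (x (n + 1))).mulVec (ut (n + 1))) = (2⁻¹ : ℝ) • A := by
        rw [hA, smul_smul]; norm_num
      have hXn : (2⁻¹ : ℝ) • B = toE d ((G (x n)).mulVec (ut n)) := by
        rw [hB, smul_smul]; norm_num
      have hNsucc : Nsum G x (n + 1)
          = Nsum G x n + nuf G (x (n + 1)) (x (n + 1 + 1) - x (n + 1)) := by
        unfold Nsum
        rw [Finset.sum_Icc_succ_top (by omega : 1 ≤ n + 1)]
      rw [hX1, eA, smul_add, hXn, ih hn', hNsucc, smul_add, ← hnu]
      abel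
  intro t ht
  -- invert the recursion
  have hU : ∀ s < T, unE (ut s) = (G (x s))⁻¹.mulVec
      ((G (x 0)).mulVec (ut 0) + (2⁻¹ : ℝ) • unE (Nsum G x s)) := by
    intro s hs
    have e := congrArg (fun v : EuclideanSpace ℝ (Fin d) => (G (x s))⁻¹.mulVec (unE v))
      (hrec s (by omega))
    simp only [toE, unE, WithLp.ofLp_add, WithLp.ofLp_smul, WithLp.ofLp_toLp] at e
    rw [Matrix.mulVec_mulVec, Matrix.nonsing_inv_mul _ (hdet _), Matrix.one_mulVec] at e
    exact e
  -- plug into the constraint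
  have hsum : (Smat G T x).mulVec ((G (x 0)).mulVec (ut 0))
      = ba - (2⁻¹ : ℝ) • ∑ s ∈ Finset.range T, ((G (x s))⁻¹.mulVec (unE (Nsum G x s))) := by
    have e1 : (∑ s ∈ Finset.range T, unE (ut s) : Fin d → ℝ)
        = (Smat G T x).mulVec ((G (x 0)).mulVec (ut 0))
          + (2⁻¹ : ℝ) • ∑ s ∈ Finset.range T, ((G (x s))⁻¹.mulVec (unE (Nsum G x s))) := by
      rw [show Smat G T x = ∑ s ∈ Finset.range T, (G (x s))⁻¹ from rfl, sum_mulVec,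
        Finset.smul_sum, ← Finset.sum_add_distrib]
      refine Finset.sum_congr rfl fun s hs => ?_
      rw [Finset.mem_range] at hs
      rw [hU s hs, Matrix.mulVec_add, Matrix.mulVec_smul]
    have e2 : (∑ s ∈ Finset.range T, unE (ut s) : Fin d → ℝ) = ba := by
      rw [show (∑ s ∈ Finset.range T, unE (ut s) : Fin d → ℝ)
          = unE (∑ s ∈ Finset.range T, ut s) from
        (map_sum (EuclideanSpace.equiv (Fin d) ℝ).toLinearEquiv.toLinearMap _ _).symm]
      rw [h3]
      rfl
    rw [e2] at e1
    rw [eq_sub_iff_add_eq, ← e1]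
  have hq : (G (x 0)).mulVec (ut 0) = (Smat G T x)⁻¹.mulVec
      (ba - (2⁻¹ : ℝ) • ∑ s ∈ Finset.range T, ((G (x s))⁻¹.mulVec (unE (Nsum G x s)))) := by
    have hSpos : (Smat G T x).PosDef := by
      refine posdef_sum ⟨0, Finset.mem_range.2 (by omega)⟩ fun s _ => (hpos (x s)).inv
    have hSdet : IsUnit (Smat G T x).det :=
      isUnit_iff_ne_zero.2 (ne_of_gt hSpos.det_pos)
    have e := congrArg (fun v : Fin d → ℝ => (Smat G T x)⁻¹.mulVec v) hsum
    simp only at e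
    rw [Matrix.mulVec_mulVec, Matrix.nonsing_inv_mul _ hSdet, Matrix.one_mulVec] at e
    exact e
  have := hU t ht
  rw [hq] at this
  exact congrArg (toE d) this
end Georce

namespace Georce
variable {d : ℕ} (G : EuclideanSpace ℝ (Fin d) → Matrix (Fin d) (Fin d) ℝ)

theorem tendsto_usol (hG : ∀ j k, ContDiff ℝ (⊤ : ℕ∞) fun y => G y j k)
    (hpos : ∀ y, (G y).PosDef) {T : ℕ} (hT : 1 ≤ T)
    {xs : ℕ → ℕ → EuclideanSpace ℝ (Fin d)} {xhat : ℕ → EuclideanSpace ℝ (Fin d)}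
    (hconv : ∀ t, Tendsto (fun i => xs i t) atTop (nhds (xhat t)))
    (ba : Fin d → ℝ) (t : ℕ) :
    Tendsto (fun i => usol G T (xs i) ba t) atTop (nhds (usol G T xhat ba t)) := by
  have hdetne : ∀ y, (G y).det ≠ 0 := fun y => ne_of_gt (hpos y).det_pos
  have hGinv : ∀ s, Tendsto (fun i => (G (xs i s))⁻¹) atTop (nhds (G (xhat s))⁻¹) :=
    fun s => Georce2.tendsto_inv (Georce2.tendsto_G hG (hconv s)) (hdetne _)
  have hN : ∀ s, Tendsto (fun i => Nsum G (xs i) s) atTop (nhds (Nsum G xhat s)) := by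
    intro s
    unfold Nsum
    exact tendsto_finset_sum _ fun r _ =>
      Georce2.tendsto_nuf hG (hconv r) ((hconv (r + 1)).sub (hconv r))
  have hS : Tendsto (fun i => Smat G T (xs i)) atTop (nhds (Smat G T xhat)) := by
    unfold Smat
    exact tendsto_finset_sum _ fun s _ => hGinv s
  have hSdet : (Smat G T xhat).det ≠ 0 := by
    refine ne_of_gt (posdef_sum ⟨0, Finset.mem_range.2 (by omega)⟩
      fun s _ => (hpos (xhat s)).inv).det_pos
  have hr : Tendsto (fun i => ba - (2⁻¹ : ℝ) •
        ∑ s ∈ Finset.range T, ((G (xs i s))⁻¹.mulVec (unE (Nsum G (xs i) s))))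
      atTop (nhds (ba - (2⁻¹ : ℝ) •
        ∑ s ∈ Finset.range T, ((G (xhat s))⁻¹.mulVec (unE (Nsum G xhat s))))) := by
    refine tendsto_const_nhds.sub (Tendsto.const_smul ?_ _)
    exact tendsto_finset_sum _ fun s _ => Georce2.tendsto_mulVec (hGinv s) (Georce2.tendsto_unE (hN s))
  unfold usol
  exact Georce2.tendsto_mulVec (hGinv t)
    ((Georce2.tendsto_mulVec (Georce2.tendsto_inv hS hSdet) hr).add
      ((Georce2.tendsto_unE (hN t)).const_smul _))
end Georce


namespace Georce
theorem per_term {d : ℕ} {M : Matrix (Fin d) (Fin d) ℝ} (hsym : M.IsSymm) (U V : Fin d → ℝ) :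
    (U - V) ⬝ᵥ M.mulVec V + V ⬝ᵥ M.mulVec (U - V) + (-((2:ℝ) • M.mulVec U)) ⬝ᵥ (U - V)
      = -2 * ((U - V) ⬝ᵥ M.mulVec (U - V)) := by
  simp only [sub_dotProduct, dotProduct_sub, Matrix.mulVec_sub,
    neg_dotProduct, smul_dotProduct, smul_eq_mul]
  have h1 : U ⬝ᵥ M.mulVec V = V ⬝ᵥ M.mulVec U := dot_symm hsym U V
  have h2 : M.mulVec U ⬝ᵥ U = U ⬝ᵥ M.mulVec U := dotProduct_comm _ _
  have h3 : M.mulVec U ⬝ᵥ V = V ⬝ᵥ M.mulVec U := dotProduct_comm _ _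
  linarith
end Georce


end

open Georce Georce2 in
/-- Global convergence of GEORCE (Proposition 3): starting from a feasible curve,
the GEORCE iterates with exact line search are all feasible, their energies form a
nonincreasing sequence bounded below by `0`, hence convergent; and if the iterates
converge (pointwise) to a curve `x̂`, then `x̂` is a critical point of the
discretized energy. -/
theorem georce_global_convergence
    (d T : ℕ) (hd : 1 ≤ d) (hT : 2 ≤ T)
    (a b : EuclideanSpace ℝ (Fin d))
    (G : EuclideanSpace ℝ (Fin d) → Matrix (Fin d) (Fin d) ℝ)
    (hGsmooth : ∀ i j, ContDiff ℝ (⊤ : ℕ∞) fun y => G y i j)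
    (hGsym : ∀ y, (G y).IsSymm)
    (hGpos : ∀ y, (G y).PosDef)
    -- the iterates `xs i`, GEORCE updates `(utilde i, μs i)`, updated curves
    -- `xtilde i`, and line-search step sizes `αs i`
    (xs xtilde utilde μs : ℕ → ℕ → EuclideanSpace ℝ (Fin d))
    (αs : ℕ → ℝ)
    -- the initial curve is feasible
    (hfeas0 : xs 0 0 = a ∧ xs 0 T = b)
    -- `(utilde i, μs i)` solves the GEORCE system for the curve `xs i`
    (hsys1 : ∀ i, ∀ t < T,
      (2 : ℝ) • toE d ((G (xs i t)).mulVec (utilde i t)) + μs i t = 0)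
    (hsys2 : ∀ i, ∀ t, 1 ≤ t → t ≤ T - 1 →
      gradient (fun y =>
          (xs i (t + 1) - xs i t) ⬝ᵥ (G y).mulVec (xs i (t + 1) - xs i t)) (xs i t)
        + μs i t = μs i (t - 1))
    (hsys3 : ∀ i, ∑ t ∈ Finset.range T, utilde i t = b - a)
    -- `xtilde i` is the updated curve of `xs i`
    (hxtilde0 : ∀ i, xtilde i 0 = a)
    (hxtilde : ∀ i, ∀ t < T, xtilde i (t + 1) = xtilde i t + utilde i t)
    -- `αs i ∈ [0,1]` is chosen by exact line search
    (hα : ∀ i, αs i ∈ Set.Icc (0 : ℝ) 1)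
    (hlinesearch : ∀ i, ∀ β ∈ Set.Icc (0 : ℝ) 1,
      energy d T G (fun t => (1 - αs i) • xs i t + αs i • xtilde i t) ≤
        energy d T G (fun t => (1 - β) • xs i t + β • xtilde i t))
    -- the next iterate is the convex combination determined by the line search
    (hstep : ∀ i t, xs (i + 1) t = (1 - αs i) • xs i t + αs i • xtilde i t) :
    (∀ i, xs i 0 = a ∧ xs i T = b) ∧
    (∀ i, energy d T G (xs (i + 1)) ≤ energy d T G (xs i)) ∧
    (∀ i, 0 ≤ energy d T G (xs i)) ∧
    (∃ L : ℝ, Tendsto (fun i => energy d T G (xs i)) atTop (nhds L)) ∧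
    (∀ xhat : ℕ → EuclideanSpace ℝ (Fin d),
      (∀ t, Tendsto (fun i => xs i t) atTop (nhds (xhat t))) →
      ∀ t, 1 ≤ t → t ≤ T - 1 →
        gradient (fun y => energy d T G (Function.update xhat t y)) (xhat t) = 0) := by
  classical
  have hdiff : ∀ (x : EuclideanSpace ℝ (Fin d)) (j k : Fin d),
      DifferentiableAt ℝ (fun y => G y j k) x :=
    fun x j k => ((hGsmooth j k).differentiable (by simp)).differentiableAt
  -- the tilde curves
  have hxt : ∀ i, ∀ t, t ≤ T → xtilde i t = a + ∑ s ∈ Finset.range t, utilde i s := by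
    intro i t
    induction t with
    | zero => intro _; simp [hxtilde0 i]
    | succ n ih =>
      intro h
      rw [hxtilde i n (by omega), ih (by omega), Finset.sum_range_succ]
      abel
  have hxtT : ∀ i, xtilde i T = b := by
    intro i
    rw [hxt i T le_rfl, hsys3 i]
    abel
  -- Part 1 : feasibility
  have feas : ∀ i, xs i 0 = a ∧ xs i T = b := by
    intro i
    induction i with
    | zero => exact hfeas0
    | succ n ih =>
      constructor
      · rw [hstep n 0, ih.1, hxtilde0 n, ← add_smul, sub_add_cancel, one_smul]
      · rw [hstep n T, ih.2, hxtT n, ← add_smul, sub_add_cancel, one_smul]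
  -- Part 2 : monotonicity
  have mono : ∀ i, energy d T G (xs (i + 1)) ≤ energy d T G (xs i) := by
    intro i
    have h0 := hlinesearch i 0 ⟨le_rfl, zero_le_one⟩
    have e1 : (fun t => (1 - (0 : ℝ)) • xs i t + (0 : ℝ) • xtilde i t) = xs i := by
      funext t; simp
    have e2 : xs (i + 1) = fun t => (1 - αs i) • xs i t + αs i • xtilde i t :=
      funext (hstep i)
    rw [e2]
    rw [e1] at h0
    exact h0
  -- Part 3 : nonnegativity
  have nonneg : ∀ i, 0 ≤ energy d T G (xs i) := by
    intro i
    exact Finset.sum_nonneg fun t _ => quad_nonneg (hGpos _) _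
  -- Part 4 : convergence of energies
  have hconvE : ∃ L : ℝ, Tendsto (fun i => energy d T G (xs i)) atTop (nhds L) := by
    refine ⟨_, tendsto_atTop_ciInf (antitone_nat_of_succ_le mono) ⟨0, ?_⟩⟩
    rintro r ⟨i, rfl⟩
    exact nonneg i
  refine ⟨feas, mono, nonneg, hconvE, ?_⟩
  -- Part 5 : critical point at the limit
  intro xhat hconv t ht1 ht2
  set ba : Fin d → ℝ := unE (b - a) with hba
  -- uniqueness of the GEORCE update along a curve
  have hui : ∀ i, ∀ s, s < T → utilde i s = toE d (usol G T (xs i) ba s) := by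
    intro i
    refine update_unique G hGpos (by omega) (xs i) (utilde i) (μs i) ba (hsys1 i) ?_ ?_
    · intro s hs1 hs2
      rw [← gradient_quad G (hdiff _) (xs i (s + 1) - xs i s)]
      exact hsys2 i s hs1 hs2
    · rw [hsys3 i]; rfl
  set util : ℕ → EuclideanSpace ℝ (Fin d) := fun s => toE d (usol G T xhat ba s) with hutil
  have hulim' : ∀ s, s < T → Tendsto (fun i => utilde i s) atTop (nhds (util s)) := by
    intro s hs
    exact Tendsto.congr (fun i => (hui i s hs).symm)
      (tendsto_toE (tendsto_usol G hGsmooth hGpos (by omega) hconv ba s))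
  set uh : ℕ → EuclideanSpace ℝ (Fin d) := fun s => xhat (s + 1) - xhat s with huh
  set m : ℕ → EuclideanSpace ℝ (Fin d) :=
    fun s => -((2 : ℝ) • toE d ((G (xhat s)).mulVec (util s))) with hm
  have hmueq : ∀ i, ∀ s, s < T →
      μs i s = -((2 : ℝ) • toE d ((G (xs i s)).mulVec (utilde i s))) := by
    intro i s hs
    have h := hsys1 i s hs
    rw [← sub_eq_zero, sub_neg_eq_add, add_comm]
    exact h
  have hmulim : ∀ s, s < T → Tendsto (fun i => μs i s) atTop (nhds (m s)) := by
    intro s hs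
    have h1 : Tendsto (fun i => (G (xs i s)).mulVec (utilde i s)) atTop
        (nhds ((G (xhat s)).mulVec (util s))) :=
      tendsto_mulVec (tendsto_G hGsmooth (hconv s)) (tendsto_unE (hulim' s hs))
    refine Tendsto.congr (fun i => (hmueq i s hs).symm) ?_
    exact (((tendsto_toE h1).const_smul (2 : ℝ)).neg : _)
  have hs2lim : ∀ s, 1 ≤ s → s ≤ T - 1 → nuf G (xhat s) (uh s) + m s = m (s - 1) := by
    intro s hs1 hs2
    have heq : ∀ i, nuf G (xs i s) (xs i (s + 1) - xs i s) + μs i s = μs i (s - 1) := by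
      intro i
      rw [← gradient_quad G (hdiff _) (xs i (s + 1) - xs i s)]
      exact hsys2 i s hs1 hs2
    have hlhs : Tendsto (fun i => nuf G (xs i s) (xs i (s + 1) - xs i s) + μs i s) atTop
        (nhds (nuf G (xhat s) (uh s) + m s)) :=
      (tendsto_nuf hGsmooth (hconv s) ((hconv (s + 1)).sub (hconv s))).add
        (hmulim s (by omega))
    have hrhs : Tendsto (fun i => nuf G (xs i s) (xs i (s + 1) - xs i s) + μs i s) atTop
        (nhds (m (s - 1))) :=
      Tendsto.congr (fun i => (heq i).symm) (hmulim (s - 1) (by omega))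
    exact tendsto_nhds_unique hlhs hrhs
  have hs3lim : ∑ s ∈ Finset.range T, util s = b - a := by
    refine tendsto_nhds_unique
      (tendsto_finset_sum _ fun s hs => hulim' s (Finset.mem_range.1 hs)) ?_
    exact Tendsto.congr (fun i => (hsys3 i).symm) tendsto_const_nhds
  have hxhat0 : xhat 0 = a :=
    tendsto_nhds_unique (hconv 0) (Tendsto.congr (fun i => ((feas i).1).symm) tendsto_const_nhds)
  have hxhatT : xhat T = b :=
    tendsto_nhds_unique (hconv T) (Tendsto.congr (fun i => ((feas i).2).symm) tendsto_const_nhds)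
  -- limit tilde curve
  set xt : ℕ → EuclideanSpace ℝ (Fin d) :=
    fun s => a + ∑ r ∈ Finset.range s, util r with hxteq
  have hxtlim : ∀ s, s ≤ T → Tendsto (fun i => xtilde i s) atTop (nhds (xt s)) := by
    intro s hsT
    refine Tendsto.congr (fun i => (hxt i s hsT).symm) ?_
    exact tendsto_const_nhds.add (tendsto_finset_sum _ fun r hr =>
      hulim' r (by have := Finset.mem_range.1 hr; omega))
  set δ : ℕ → EuclideanSpace ℝ (Fin d) := fun s => xt s - xhat s with hδeq
  set w : ℕ → EuclideanSpace ℝ (Fin d) := fun s => δ (s + 1) - δ s with hweq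
  have hδ0 : δ 0 = 0 := by
    rw [hδeq]
    simp [hxteq, hxhat0]
  have hδT : δ T = 0 := by
    rw [hδeq]
    simp only [hxteq, hxhatT, hs3lim]
    abel_nf
  have hws : ∀ s, w s = util s - uh s := by
    intro s
    rw [hweq, hδeq, huh]
    simp only [hxteq, Finset.sum_range_succ]
    abel
  -- the limit of the line search inequality
  have hlower : ∀ β ∈ Set.Icc (0 : ℝ) 1,
      energy d T G xhat ≤ energy d T G (fun s => xhat s + β • δ s) := by
    intro β hβ
    have hL : Tendsto (fun i => energy d T G (xs (i + 1))) atTop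
        (nhds (energy d T G xhat)) :=
      (tendsto_energy G hGsmooth fun s _ => hconv s).comp (tendsto_add_atTop_nat 1)
    have hR : Tendsto (fun i => energy d T G (fun s => (1 - β) • xs i s + β • xtilde i s))
        atTop (nhds (energy d T G (fun s => (1 - β) • xhat s + β • xt s))) :=
      tendsto_energy G hGsmooth fun s hsT =>
        ((hconv s).const_smul (1 - β)).add ((hxtlim s hsT).const_smul β)
    have hle : energy d T G xhat ≤ energy d T G (fun s => (1 - β) • xhat s + β • xt s) := by
      refine le_of_tendsto_of_tendsto' hL hR fun i => ?_
      rw [show xs (i + 1) = fun s => (1 - αs i) • xs i s + αs i • xtilde i s from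
        funext (hstep i)]
      exact hlinesearch i β hβ
    have ecomb : (fun s => (1 - β) • xhat s + β • xt s)
        = fun s => xhat s + β • δ s := by
      funext s
      rw [hδeq]
      simp only [smul_sub, sub_smul, one_smul]
      abel
    rwa [ecomb] at hle
  -- derivative of the energy along the segment
  set D : ℝ := ∑ s ∈ Finset.range T,
    (unE (w s) ⬝ᵥ (G (xhat s)).mulVec (unE (uh s))
      + unE (uh s) ⬝ᵥ (G (xhat s)).mulVec (unE (w s))
      + ∑ i, nuf G (xhat s) (uh s) i * δ s i) with hDeq
  have hf : HasDerivAt (fun β : ℝ => energy d T G (fun s => xhat s + β • δ s)) D 0 := by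
    have hfun : (fun β : ℝ => energy d T G (fun s => xhat s + β • δ s))
        = fun β : ℝ => ∑ s ∈ Finset.range T,
            ((uh s + β • w s) ⬝ᵥ (G (xhat s + β • δ s)).mulVec (uh s + β • w s)) := by
      funext β
      refine Finset.sum_congr rfl fun s _ => ?_
      have hv : (xhat (s + 1) + β • δ (s + 1)) - (xhat s + β • δ s) = uh s + β • w s := by
        simp only [hweq, huh]
        module
      beta_reduce
      rw [hv, show WithLp.ofLp (xhat (s + 1) + β • δ (s + 1)) - WithLp.ofLp (xhat s + β • δ s)
        = WithLp.ofLp (uh s) + β • WithLp.ofLp (w s) from congrArg WithLp.ofLp hv]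
    rw [hDeq, hfun]
    exact HasDerivAt.fun_sum fun s _ => hasDerivAt_term G (hdiff _) (uh s) (w s) (δ s)
  have hD0 : 0 ≤ D := by
    refine deriv_nonneg_of_min hf ?_
    intro β hβ
    have e00 : (fun s => xhat s + (0 : ℝ) • δ s) = xhat := by funext s; simp
    rw [e00]
    exact hlower β hβ
  -- the derivative equals the negative quadratic form
  have hDneg : D = -2 * ∑ s ∈ Finset.range T,
      ((unE (util s) - unE (uh s)) ⬝ᵥ (G (xhat s)).mulVec (unE (util s) - unE (uh s))) := by
    have e1 : ∀ s ∈ Finset.range T,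
        (∑ i, nuf G (xhat s) (uh s) i * δ s i)
          = (unE (m (s - 1)) - unE (m s)) ⬝ᵥ unE (δ s) := by
      intro s hs
      rw [Finset.mem_range] at hs
      rcases Nat.eq_zero_or_pos s with h0 | hpos'
      · subst h0
        rw [show unE (δ 0) = 0 from congrArg unE hδ0]
        rw [dotProduct_zero]
        refine Finset.sum_eq_zero fun i _ => ?_
        rw [show δ 0 i = (0 : EuclideanSpace ℝ (Fin d)) i from congrFun (congrArg unE hδ0) i]
        simp
      · have hnu := hs2lim s (by omega) (by omega)
        have hnu' : nuf G (xhat s) (uh s) = m (s - 1) - m s := eq_sub_of_add_eq hnu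
        rw [show (∑ i, nuf G (xhat s) (uh s) i * δ s i)
            = unE (nuf G (xhat s) (uh s)) ⬝ᵥ unE (δ s) from rfl]
        rw [show unE (nuf G (xhat s) (uh s)) = unE (m (s - 1)) - unE (m s) from
          congrArg unE hnu']
    have e2 : ∑ s ∈ Finset.range T, (unE (m (s - 1)) - unE (m s)) ⬝ᵥ unE (δ s)
        = ∑ s ∈ Finset.range T, unE (m s) ⬝ᵥ (unE (δ (s + 1)) - unE (δ s)) := by
      refine (abel_sum (fun s => unE (m s)) (fun s => unE (δ s)) ?_ ?_).symm
      · exact congrArg unE hδ0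
      · exact congrArg unE hδT
    rw [hDeq]
    rw [Finset.sum_congr rfl fun s hs => by rw [e1 s hs]]
    rw [Finset.sum_add_distrib, e2, ← Finset.sum_add_distrib, Finset.mul_sum]
    refine Finset.sum_congr rfl fun s hs => ?_
    have hWs : unE (w s) = unE (util s) - unE (uh s) := congrArg unE (hws s)
    have hdd : unE (δ (s + 1)) - unE (δ s) = unE (w s) := rfl
    have hmvw : unE (m s) = -((2:ℝ) • (G (xhat s)).mulVec (unE (util s))) := rfl
    rw [hdd, hWs, hmvw]
    exact per_term (hGsym (xhat s)) (unE (util s)) (unE (uh s))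
  -- the update coincides with the velocities at the limit
  have hsumq : ∀ s ∈ Finset.range T,
      0 ≤ (unE (util s) - unE (uh s)) ⬝ᵥ (G (xhat s)).mulVec (unE (util s) - unE (uh s)) :=
    fun s _ => quad_nonneg (hGpos _) _
  have hzero : ∀ s ∈ Finset.range T,
      (unE (util s) - unE (uh s)) ⬝ᵥ (G (xhat s)).mulVec (unE (util s) - unE (uh s)) = 0 := by
    have hle : ∑ s ∈ Finset.range T,
        ((unE (util s) - unE (uh s)) ⬝ᵥ (G (xhat s)).mulVec (unE (util s) - unE (uh s))) ≤ 0 := by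
      have h1 := hD0
      rw [hDneg] at h1
      linarith
    exact (Finset.sum_eq_zero_iff_of_nonneg hsumq).1
      (le_antisymm hle (Finset.sum_nonneg hsumq))
  have huu : ∀ s, s < T → util s = uh s := by
    intro s hs
    by_contra hne
    have hvne : unE (util s) - unE (uh s) ≠ 0 := by
      intro h0
      exact hne (WithLp.ofLp_injective _ (sub_eq_zero.1 h0))
    exact absurd (hzero s (Finset.mem_range.2 hs)) (ne_of_gt (quad_pos (hGpos _) hvne))
  -- Step C : the gradient at the limit point vanishes
  have htT : t < T := by omega
  have ht1T : t - 1 < T := by omega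
  have hidx : t - 1 + 1 = t := by omega
  set V : ℕ → EuclideanSpace ℝ (Fin d) := fun s =>
    if s = t then
      nuf G (xhat t) (fun i => xhat (t + 1) i - xhat t i)
        - toE d ((2 : ℝ) • (G (xhat t)).mulVec (fun i => xhat (t + 1) i - xhat t i))
    else if s = t - 1 then
      toE d ((2 : ℝ) • (G (xhat (t - 1))).mulVec (xhat t - xhat (t - 1)))
    else 0 with hV
  have hgrads : ∀ s ∈ Finset.range T, HasGradientAt
      (fun y => (Function.update xhat t y (s + 1) - Function.update xhat t y s) ⬝ᵥ
        (G (Function.update xhat t y s)).mulVec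
          (Function.update xhat t y (s + 1) - Function.update xhat t y s))
      (V s) (xhat t) := by
    intro s hs
    by_cases hst : s = t
    · subst hst
      have hFt : (fun y : EuclideanSpace ℝ (Fin d) =>
          (Function.update xhat s y (s + 1) - Function.update xhat s y s) ⬝ᵥ
            (G (Function.update xhat s y s)).mulVec
              (Function.update xhat s y (s + 1) - Function.update xhat s y s))
          = fun y : EuclideanSpace ℝ (Fin d) =>
            (xhat (s + 1) - y) ⬝ᵥ (G y).mulVec (xhat (s + 1) - y) := by
        funext y
        rw [Function.update_self, Function.update_of_ne (by omega : s + 1 ≠ s)]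
      rw [hFt]
      simp only [hV, if_pos rfl]
      exact hasGradientAt_back G (hdiff _) (hGsym _) (xhat (s + 1))
    · by_cases hst1 : s = t - 1
      · subst hst1
        have hFt1 : (fun y : EuclideanSpace ℝ (Fin d) =>
            (Function.update xhat t y (t - 1 + 1) - Function.update xhat t y (t - 1)) ⬝ᵥ
              (G (Function.update xhat t y (t - 1))).mulVec
                (Function.update xhat t y (t - 1 + 1) - Function.update xhat t y (t - 1)))
            = fun y : EuclideanSpace ℝ (Fin d) =>
              (y - xhat (t - 1)) ⬝ᵥ (G (xhat (t - 1))).mulVec (y - xhat (t - 1)) := by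
          funext y
          rw [hidx, Function.update_self, Function.update_of_ne (by omega : t - 1 ≠ t)]
        rw [hFt1]
        simp only [hV, if_neg (by omega : ¬ (t - 1 = t)), if_pos rfl]
        exact hasGradientAt_sq (hGsym (xhat (t - 1))) (xhat (t - 1)) (xhat t)
      · have hFs : (fun y : EuclideanSpace ℝ (Fin d) =>
            (Function.update xhat t y (s + 1) - Function.update xhat t y s) ⬝ᵥ
              (G (Function.update xhat t y s)).mulVec
                (Function.update xhat t y (s + 1) - Function.update xhat t y s))
            = fun _ => (xhat (s + 1) - xhat s) ⬝ᵥ (G (xhat s)).mulVec (xhat (s + 1) - xhat s) := by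
          funext y
          rw [Function.update_of_ne (by omega : s + 1 ≠ t),
            Function.update_of_ne (by omega : s ≠ t)]
        rw [hFs]
        simp only [hV, if_neg hst, if_neg hst1]
        exact hasGradientAt_const (x := xhat t)
          (c := (xhat (s + 1) - xhat s) ⬝ᵥ (G (xhat s)).mulVec (xhat (s + 1) - xhat s))
  have htotal := hasGradientAt_sum (Finset.range T)
    (fun s y => (Function.update xhat t y (s + 1) - Function.update xhat t y s) ⬝ᵥ
      (G (Function.update xhat t y s)).mulVec
        (Function.update xhat t y (s + 1) - Function.update xhat t y s)) V hgrads
  have hVsum : ∑ s ∈ Finset.range T, V s = V (t - 1) + V t := by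
    have hsub : ({t - 1, t} : Finset ℕ) ⊆ Finset.range T := by
      intro s hs
      simp only [Finset.mem_insert, Finset.mem_singleton] at hs
      rcases hs with h | h <;> (rw [Finset.mem_range]; omega)
    have hout : ∀ s ∈ Finset.range T, s ∉ ({t - 1, t} : Finset ℕ) → V s = 0 := by
      intro s _ hs
      simp only [Finset.mem_insert, Finset.mem_singleton, not_or] at hs
      simp only [hV, if_neg hs.2, if_neg hs.1]
    rw [← Finset.sum_subset hsub hout]
    rw [Finset.sum_insert (by simp only [Finset.mem_singleton]; omega), Finset.sum_singleton]
  have hnuf2 := hs2lim t ht1 ht2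
  have e2' : uh (t - 1) = xhat t - xhat (t - 1) := by
    simp only [huh, hidx]
  have e1 : toE d ((2 : ℝ) • (G (xhat t)).mulVec (fun i => xhat (t + 1) i - xhat t i))
      = -(m t) := by
    simp only [hm, neg_neg, huu t htT]
    rfl
  have e2 : toE d ((2 : ℝ) • (G (xhat (t - 1))).mulVec (xhat t - xhat (t - 1)))
      = -(m (t - 1)) := by
    simp only [hm, neg_neg, huu (t - 1) ht1T, e2']
    rfl
  have e3 : nuf G (xhat t) (fun i => xhat (t + 1) i - xhat t i) = nuf G (xhat t) (uh t) := rfl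
  have hVt1 : V (t - 1) + V t = 0 := by
    simp only [hV, if_neg (by omega : ¬ (t - 1 = t)), if_pos rfl]
    rw [e1, e2, e3, sub_neg_eq_add, ← hnuf2]
    exact neg_add_cancel _
  have hfinal := htotal.gradient
  rw [hVsum, hVt1] at hfinal
  exact hfinal
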